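/- arXiv:math/0605015 — 2 statements merged into one kernel-verified Lean document; each statement's English description precedes it below -/
import Mathlib

section
/- (Proposition 4.9, evaluation form) For every m = 1,…,N and every Q ∈ End(V), the following identity of difference operators in u with End(M)-valued rational coefficients holds: tr_{V^{⊗m}}[ (1 − Q^{(1)} T^{(1)}(u;z) e^{−∂_u}) (1 − Q^{(2)} T^{(2)}(u;z) e^{−∂_u}) ⋯ (1 − Q^{(m)} T^{(m)}(u;z) e^{−∂_u}) (A^{(m)} ⊗ id_M) ] = (1/(N−m)!) Σ_{k=0}^m (−1)^k ((N−k)!/(m−k)!) 𝒯_{k,Q}(u;z) e^{−k∂_u}. Here the left-hand side is the composition of difference operators whose coefficients are End(V^{⊗m}) ⊗ End(M)-valued rational functions (Q^{(i)} and the End(V)-part of T^{(i)}(u;z) act on the i-th copy of V in V^{⊗m}), and the partial trace over V^{⊗m} is applied to each coefficient. In particular, for m = N the left-hand side equals Σ_{k=0}^N (−1)^k 𝒯_{k,Q}(u;z) e^{−k∂_u}. -/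
open scoped TensorProduct

noncomputable section

namespace BetheStatements

attribute [local instance 100] LieRing.ofAssociativeRing

/-- The Lie algebra `gl_N` of complex `N × N` matrices. -/
abbrev gl (N : ℕ) := Matrix (Fin N) (Fin N) ℂ

/-- The matrix unit `e_{ab} = E_{ab}`. -/
def matE (N : ℕ) (a b : Fin N) : gl N := Matrix.single a b 1

/-- The flip map `P ∈ End(V ⊗ V)`, `P (x ⊗ y) = y ⊗ x`. -/
def Pmat (N : ℕ) : Matrix (Fin N × Fin N) (Fin N × Fin N) ℂ :=
  Matrix.of fun x y => if x.1 = y.2 ∧ x.2 = y.1 then (1 : ℂ) else 0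

/-- The rational R-matrix `R(u) = u · id + P ∈ End(V ⊗ V)`. -/
def Rmat (N : ℕ) (u : ℂ) : Matrix (Fin N × Fin N) (Fin N × Fin N) ℂ :=
  u • (1 : Matrix (Fin N × Fin N) (Fin N × Fin N) ℂ) + Pmat N

/-- The skew-symmetrization projector `A^{(k)} ∈ End(V^{⊗k})`. -/
def Ask (k N : ℕ) : Matrix (Fin k → Fin N) (Fin k → Fin N) ℂ :=
  Matrix.of fun x y => (Nat.factorial k : ℂ)⁻¹ *
    ∑ σ : Equiv.Perm (Fin k), ((Equiv.Perm.sign σ : ℤ) : ℂ) * (if x = y ∘ σ then 1 else 0)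

/-- `X^{(p)}`: embedding of an operator on `V` into `End(V^{⊗k})` (acting on tensor factor `p`),
with entries in a (possibly noncommutative) ring `A`; a matrix over `A` indexed by
`Fin k → Fin N` represents an element of `End(V^{⊗k}) ⊗ A`. -/
def emb1 {A : Type*} [Ring A] {N k : ℕ} (p : Fin k) (X : Matrix (Fin N) (Fin N) A) :
    Matrix (Fin k → Fin N) (Fin k → Fin N) A :=
  Matrix.of fun x y => if ∀ j, j ≠ p → x j = y j then X (x p) (y p) else 0

/-- `X^{(pq)}`: embedding of an operator on `V ⊗ V` into `End(V^{⊗k})`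
(acting on the tensor factors `p` and `q`). -/
def emb2 {A : Type*} [Ring A] {N k : ℕ} (p q : Fin k)
    (X : Matrix (Fin N × Fin N) (Fin N × Fin N) A) :
    Matrix (Fin k → Fin N) (Fin k → Fin N) A :=
  Matrix.of fun x y => if ∀ j, j ≠ p → j ≠ q → x j = y j then X (x p, x q) (y p, y q) else 0

section Modules

variable {N n : ℕ}
variable (M : Fin n → Type*) [∀ i, AddCommGroup (M i)] [∀ i, Module ℂ (M i)]
variable (ρ : ∀ i, gl N →ₗ⁅ℂ⁆ Module.End ℂ (M i))
variable (z : Fin n → ℂ)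

/-- `x^{(i)}` : the action of `x ∈ gl_N` on the `i`-th factor of `M = M_1 ⊗ ⋯ ⊗ M_n`. -/
def act (i : Fin n) (x : gl N) : Module.End ℂ (⨂[ℂ] j, M j) :=
  PiTensorProduct.map (Function.update (fun j => (LinearMap.id : M j →ₗ[ℂ] M j)) i (ρ i x))

/-- `L_i(x) = id + x⁻¹ Σ_{a,b} E_{ab} ⊗ e_{ba}^{(i)}`, as a matrix over `End(M)`. -/
def Lfac (i : Fin n) (x : ℂ) : Matrix (Fin N) (Fin N) (Module.End ℂ (⨂[ℂ] j, M j)) :=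
  1 + x⁻¹ • Matrix.of fun a b => act M ρ i (matE N b a)

/-- `T(u;z) = L_n(u - z_n) ⋯ L_1(u - z_1)`:
the Yangian generating matrix acting on the tensor product of evaluation modules
`M_1(z_1) ⊗ ⋯ ⊗ M_n(z_n)`. -/
def Tmat (u : ℂ) : Matrix (Fin N) (Fin N) (Module.End ℂ (⨂[ℂ] j, M j)) :=
  ((List.finRange n).reverse.map fun i => Lfac M ρ i (u - z i)).prod

/-- The transfer matrix `𝒯_{k,Q}(u;z)` of the XXX-type model:
`tr_{V^{⊗k}} [(Q^{⊗k} ⊗ id) T^{(1)}(u;z) T^{(2)}(u−1;z) ⋯ T^{(k)}(u−k+1;z) (A^{(k)} ⊗ id)]`. -/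
def transferT (Q : gl N) (k : ℕ) (u : ℂ) : Module.End ℂ (⨂[ℂ] j, M j) :=
  Matrix.trace
    ((Matrix.of fun (x y : Fin k → Fin N) =>
        algebraMap ℂ (Module.End ℂ (⨂[ℂ] j, M j)) (∏ r, Q (x r) (y r)))
      * ((List.finRange k).map fun r => emb1 r (Tmat M ρ z (u - ((r : ℕ) : ℂ)))).prod
      * (Ask k N).map (algebraMap ℂ (Module.End ℂ (⨂[ℂ] j, M j))))

end Modules

/-- The identity difference operator (coefficient of `e^{-k ∂_u}` as a function of `u`). -/
def dOne {S : Type*} [Ring S] : ℕ → ℂ → S := fun k _ => if k = 0 then 1 else 0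

/-- Composition of difference operators `D = Σ_k C_k(u) e^{−k∂_u}`:
`e^{−j∂_u} ∘ C(u) = C(u−j) ∘ e^{−j∂_u}`. -/
def dMul {S : Type*} [Ring S] (D E : ℕ → ℂ → S) : ℕ → ℂ → S :=
  fun k u => ∑ j ∈ Finset.range (k + 1), D j u * E (k - j) (u - (j : ℂ))

/-- The difference operator `1 − Q^{(i)} T^{(i)}(u;z) e^{−∂_u}` with coefficients in
`End(V^{⊗m}) ⊗ End(M)`. -/
def dFactor {N n : ℕ} (M : Fin n → Type*) [∀ i, AddCommGroup (M i)] [∀ i, Module ℂ (M i)]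
    (ρ : ∀ i, gl N →ₗ⁅ℂ⁆ Module.End ℂ (M i)) (z : Fin n → ℂ) {m : ℕ} (Q : gl N) (i : Fin m) :
    ℕ → ℂ → Matrix (Fin m → Fin N) (Fin m → Fin N) (Module.End ℂ (⨂[ℂ] j, M j)) :=
  fun k u =>
    if k = 0 then 1
    else if k = 1 then
      -(emb1 i (Q.map (algebraMap ℂ (Module.End ℂ (⨂[ℂ] j, M j)))) * emb1 i (Tmat M ρ z u))
    else 0

section AuxDiff

set_option linter.unusedSectionVars false

variable {S : Type*} [Ring S]

/-- degree-one difference operator `1 + g(u) e^{-∂}` (as coefficient function). -/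
def toD (g : ℂ → S) : ℕ → ℂ → S := fun k u => if k = 0 then 1 else if k = 1 then g u else 0

lemma dMul_toD (g : ℂ → S) (E : ℕ → ℂ → S) (k : ℕ) (u : ℂ) :
    dMul (toD g) E k u = E k u + if k = 0 then 0 else g u * E (k - 1) (u - 1) := by
  cases k with
  | zero => simp [dMul, toD]
  | succ k =>
    rw [dMul, Finset.sum_range_succ']
    have h1 : ∀ i ∈ Finset.range (k + 1),
        toD g (i + 1) u * E (k + 1 - (i + 1)) (u - ((i : ℂ) + 1)) =
        (if i = 0 then g u * E k (u - 1) else 0) := by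
      intro i _
      cases i with
      | zero => simp [toD]
      | succ i => simp [toD]
    rw [Finset.sum_congr rfl (by exact_mod_cast h1), Finset.sum_ite_eq' (Finset.range (k+1))]
    simp [toD, add_comm]

def prodShift : List (ℂ → S) → ℂ → S
  | [], _ => 1
  | g :: t, u => g u * prodShift t (u - 1)

lemma foldr_eval (L : List (ℂ → S)) (k : ℕ) (u : ℂ) :
    ((L.map toD).foldr dMul dOne) k u
      = ((List.sublistsLen k L).map (prodShift · u)).sum := by
  induction L generalizing k u with
  | nil =>
    cases k with
    | zero => simp [dOne, prodShift]
    | succ k =>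
      rw [List.sublistsLen_of_length_lt (by simp)]
      simp [dOne]
  | cons g t ih =>
    rw [List.map_cons, List.foldr_cons, dMul_toD]
    cases k with
    | zero => simp [ih, List.sublistsLen_zero, prodShift]
    | succ k =>
      rw [List.sublistsLen_succ_cons, List.map_append, List.sum_append, ih, ih]
      simp only [Nat.succ_ne_zero, if_false, Nat.succ_sub_one, List.map_map]
      congr 1
      rw [← List.sum_map_mul_left]
      refine congrArg List.sum (List.map_congr_left fun T _ => ?_)
      simp [Function.comp, prodShift]

lemma sublistsLen_map' {α β : Type*} (f : α → β) :
    ∀ (n : ℕ) (l : List α),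
      List.sublistsLen n (l.map f) = (List.sublistsLen n l).map (List.map f)
  | 0, l => by simp
  | n+1, [] => by simp
  | n+1, a :: l => by
    rw [List.map_cons, List.sublistsLen_succ_cons, List.sublistsLen_succ_cons,
      sublistsLen_map' f (n+1) l, sublistsLen_map' f n l, List.map_append,
      List.map_map, List.map_map]
    rfl

lemma trace_list_sum_mul {n' : Type*} [Fintype n'] [DecidableEq n']
    (B : Matrix n' n' S) :
    ∀ l : List (Matrix n' n' S),
      Matrix.trace (l.sum * B) = ((l.map fun A => Matrix.trace (A * B))).sum
  | [] => by simp
  | A :: l => by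
    rw [List.sum_cons, add_mul, Matrix.trace_add, List.map_cons, List.sum_cons,
      trace_list_sum_mul B l]

lemma trace_mul_sum_form {n' : Type*} [Fintype n'] [DecidableEq n']
    (A B : Matrix n' n' S) :
    Matrix.trace (A * B) = ∑ x : n', ∑ y : n', A x y * B y x := by
  simp [Matrix.trace, Matrix.diag, Matrix.mul_apply]

end AuxDiff

section AuxEmb

variable {A : Type*} [Ring A] {N k : ℕ}

lemma emb1_apply (p : Fin k) (X : Matrix (Fin N) (Fin N) A) (x y : Fin k → Fin N) :
    emb1 p X x y = if ∀ j, j ≠ p → x j = y j then X (x p) (y p) else 0 := rfl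

lemma emb1_mul (p : Fin k) (X Y : Matrix (Fin N) (Fin N) A) :
    emb1 p X * emb1 p Y = emb1 p (X * Y) := by
  ext x y
  rw [Matrix.mul_apply]
  have hfilter : (Finset.univ.filter (fun w : Fin k → Fin N => ∀ j, j ≠ p → x j = w j))
      = Finset.univ.image (Function.update x p) := by
    ext w
    simp only [Finset.mem_filter, Finset.mem_univ, true_and, Finset.mem_image]
    constructor
    · intro h
      refine ⟨w p, ?_⟩
      funext j
      by_cases hj : j = p
      · subst hj; simp
      · rw [Function.update_of_ne hj, h j hj]
    · rintro ⟨c, rfl⟩ j hj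
      rw [Function.update_of_ne hj]
  have hzero : ∀ w ∈ Finset.univ,
      w ∉ (Finset.univ.filter (fun w : Fin k → Fin N => ∀ j, j ≠ p → x j = w j)) →
      emb1 p X x w * emb1 p Y w y = 0 := by
    intro w _ hw
    simp only [Finset.mem_filter, Finset.mem_univ, true_and] at hw
    rw [emb1_apply, if_neg hw, zero_mul]
  rw [← Finset.sum_subset (Finset.filter_subset _ _) hzero, hfilter,
    Finset.sum_image (fun a _ b _ h => by
      have := congrFun h p; simpa using this)]
  have heval : ∀ c : Fin N,
      emb1 p X x (Function.update x p c) * emb1 p Y (Function.update x p c) y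
        = X (x p) c * (if ∀ j, j ≠ p → x j = y j then Y c (y p) else 0) := by
    intro c
    rw [emb1_apply, emb1_apply,
      if_pos (fun j hj => (Function.update_of_ne (β := fun _ => Fin N) hj c x).symm)]
    rw [Function.update_self]
    congr 1
    refine if_congr ⟨fun h j hj => ?_, fun h j hj => ?_⟩ rfl rfl
    · rw [← h j hj, Function.update_of_ne hj]
    · rw [Function.update_of_ne hj, h j hj]
  rw [Finset.sum_congr rfl (fun c _ => heval c)]
  by_cases hxy : ∀ j, j ≠ p → x j = y j
  · simp only [if_pos hxy, emb1_apply, Matrix.mul_apply]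
  · simp only [if_neg hxy, emb1_apply, mul_zero, Finset.sum_const_zero]

lemma prod_emb1_apply (l : List (Fin k × Matrix (Fin N) (Fin N) A))
    (hl : (l.map Prod.fst).Nodup) (x y : Fin k → Fin N) :
    ((l.map fun s => emb1 s.1 s.2).prod) x y
      = if (∀ j, j ∉ l.map Prod.fst → x j = y j)
          then ((l.map fun s => s.2 (x s.1) (y s.1)).prod) else 0 := by
  induction l generalizing x y with
  | nil =>
    simp only [List.map_nil, List.prod_nil, List.not_mem_nil, not_false_iff, forall_true_left]
    rw [Matrix.one_apply]
    exact if_congr funext_iff rfl rfl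
  | cons s t ih =>
    simp only [List.map_cons, List.nodup_cons] at hl
    obtain ⟨hp, htn⟩ := hl
    simp only [List.map_cons, List.prod_cons]
    rw [Matrix.mul_apply]
    rw [Finset.sum_eq_single (Function.update x s.1 (y s.1))]
    · have h1 : emb1 s.1 s.2 x (Function.update x s.1 (y s.1)) = s.2 (x s.1) (y s.1) := by
        rw [emb1_apply, if_pos (fun j hj => (Function.update_of_ne hj _ x).symm),
          Function.update_self]
      rw [h1, ih htn]
      have hval : (t.map fun s' => s'.2 (Function.update x s.1 (y s.1) s'.1) (y s'.1))
          = t.map fun s' => s'.2 (x s'.1) (y s'.1) := by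
        refine List.map_congr_left fun s' hs' => ?_
        have : s'.1 ≠ s.1 := fun h => hp (h ▸ List.mem_map_of_mem (f := Prod.fst) hs')
        rw [Function.update_of_ne this]
      rw [hval]
      have hiff : (∀ j, j ∉ t.map Prod.fst → Function.update x s.1 (y s.1) j = y j)
          ↔ (∀ j, j ∉ (s.1 :: t.map Prod.fst) → x j = y j) := by
        constructor
        · intro h j hj
          rw [List.mem_cons] at hj
          push_neg at hj
          rw [← h j hj.2, Function.update_of_ne hj.1]
        · intro h j hj
          by_cases hjs : j = s.1
          · subst hjs; rw [Function.update_self]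
          · rw [Function.update_of_ne hjs]
            exact h j (by simp [hjs, hj])
      rw [if_congr hiff rfl rfl, mul_ite, mul_zero]
    · intro w _ hw
      rw [ih htn]
      by_cases h1 : ∀ j, j ≠ s.1 → x j = w j
      · by_cases h2 : ∀ j, j ∉ t.map Prod.fst → w j = y j
        · exfalso
          apply hw
          funext j
          by_cases hj : j = s.1
          · subst hj; rw [Function.update_self]; exact h2 _ hp
          · rw [Function.update_of_ne hj, ← h1 j hj]
        · rw [if_neg h2, mul_zero]
      · rw [emb1_apply, if_neg h1, zero_mul]
    · intro h
      exact absurd (Finset.mem_univ _) h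

end AuxEmb

section AuxAsk

lemma Ask_apply (k N : ℕ) (x y : Fin k → Fin N) :
    Ask k N x y = (Nat.factorial k : ℂ)⁻¹ *
      ∑ σ : Equiv.Perm (Fin k), ((Equiv.Perm.sign σ : ℤ) : ℂ) * (if x = y ∘ σ then 1 else 0) :=
  rfl

lemma Ask_comp_perm {k N : ℕ} (σ : Equiv.Perm (Fin k)) (x y : Fin k → Fin N) :
    Ask k N (x ∘ σ) (y ∘ σ) = Ask k N x y := by
  rw [Ask_apply, Ask_apply]
  congr 1
  rw [← Equiv.sum_comp ((Equiv.mulLeft σ).trans (Equiv.mulRight σ⁻¹))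
    (fun τ => ((Equiv.Perm.sign τ : ℤ) : ℂ) * (if x = y ∘ τ then 1 else 0))]
  refine Finset.sum_congr rfl fun τ _ => ?_
  simp only [Equiv.trans_apply, Equiv.coe_mulLeft, Equiv.coe_mulRight]
  have hsg : Equiv.Perm.sign (σ * τ * σ⁻¹) = Equiv.Perm.sign τ := by
    rw [map_mul, map_mul, Equiv.Perm.sign_inv,
      mul_comm (Equiv.Perm.sign σ) (Equiv.Perm.sign τ), mul_assoc, Int.units_mul_self, mul_one]
  rw [hsg]
  refine congrArg _ (if_congr ?_ rfl rfl)
  constructor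
  · intro h
    funext j
    have := congrFun h (σ⁻¹ j)
    simpa [Equiv.Perm.mul_apply] using this
  · intro h
    funext i
    have := congrFun h (σ i)
    simpa [Equiv.Perm.mul_apply] using this

lemma Ask_cons_sum {κ N : ℕ} (a b : Fin κ → Fin N) :
    ∑ c : Fin N, Ask (κ+1) N (Fin.cons c b) (Fin.cons c a)
      = (((N:ℂ) - (κ:ℂ)) / ((κ:ℂ)+1)) * Ask κ N b a := by
  classical
  set S : ℂ := ∑ e : Equiv.Perm (Fin κ),
      ((Equiv.Perm.sign e : ℤ) : ℂ) * (if b = a ∘ e then 1 else 0) with hS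
  have key : ∑ c : Fin N, ∑ σ : Equiv.Perm (Fin (κ+1)),
      ((Equiv.Perm.sign σ : ℤ) : ℂ) * (if Fin.cons c b = Fin.cons c a ∘ σ then 1 else 0)
      = ((N:ℂ) - (κ:ℂ)) * S := by
    have hre : ∀ c : Fin N, (∑ σ : Equiv.Perm (Fin (κ+1)),
        ((Equiv.Perm.sign σ : ℤ) : ℂ) * (if Fin.cons c b = Fin.cons c a ∘ σ then 1 else 0))
        = ∑ p : Fin (κ+1), ∑ e : Equiv.Perm (Fin κ),
          ((Equiv.Perm.sign (Equiv.Perm.decomposeFin.symm (p, e)) : ℤ) : ℂ) *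
            (if Fin.cons c b = Fin.cons c a ∘ (Equiv.Perm.decomposeFin.symm (p, e))
              then 1 else 0) := by
      intro c
      rw [← Equiv.sum_comp (Equiv.Perm.decomposeFin.symm)
        (fun σ => ((Equiv.Perm.sign σ : ℤ) : ℂ) *
          (if Fin.cons c b = Fin.cons c a ∘ σ then 1 else 0)), Fintype.sum_prod_type]
    rw [Finset.sum_congr rfl fun c _ => hre c, Finset.sum_comm]
    rw [Fin.sum_univ_succ]
    have h0 : ∑ c : Fin N, ∑ e : Equiv.Perm (Fin κ),
        ((Equiv.Perm.sign (Equiv.Perm.decomposeFin.symm (0, e)) : ℤ) : ℂ) *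
          (if Fin.cons c b = Fin.cons c a ∘ (Equiv.Perm.decomposeFin.symm (0, e))
            then 1 else 0) = (N : ℂ) * S := by
      have : ∀ (c : Fin N) (e : Equiv.Perm (Fin κ)),
          (Fin.cons c b = Fin.cons c a ∘ (Equiv.Perm.decomposeFin.symm (0, e)))
            ↔ b = a ∘ e := by
        intro c e
        rw [funext_iff, funext_iff, Fin.forall_fin_succ]
        simp [Equiv.Perm.decomposeFin_symm_apply_succ]
      have h1 : ∀ c : Fin N, (∑ e : Equiv.Perm (Fin κ),
          ((Equiv.Perm.sign (Equiv.Perm.decomposeFin.symm (0, e)) : ℤ) : ℂ) *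
          (if Fin.cons c b = Fin.cons c a ∘ (Equiv.Perm.decomposeFin.symm (0, e))
            then 1 else 0)) = S := by
        intro c
        refine Finset.sum_congr rfl fun e _ => ?_
        rw [if_congr (this c e) rfl rfl]
        congr 2
        rw [Equiv.Perm.decomposeFin.symm_sign]
        simp
      rw [Finset.sum_congr rfl fun c _ => h1 c, Finset.sum_const, Finset.card_univ,
        Fintype.card_fin, nsmul_eq_mul]
    rw [h0]
    have hq : ∀ q : Fin κ, ∑ c : Fin N, ∑ e : Equiv.Perm (Fin κ),
        ((Equiv.Perm.sign (Equiv.Perm.decomposeFin.symm (q.succ, e)) : ℤ) : ℂ) *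
          (if Fin.cons c b = Fin.cons c a ∘ (Equiv.Perm.decomposeFin.symm (q.succ, e))
            then 1 else 0) = -S := by
      intro q
      have hcond : ∀ (c : Fin N) (e : Equiv.Perm (Fin κ)),
          (Fin.cons c b = Fin.cons c a ∘ (Equiv.Perm.decomposeFin.symm (q.succ, e)))
            ↔ (c = a q ∧ b = a ∘ e) := by
        intro c e
        rw [funext_iff, Fin.forall_fin_succ]
        constructor
        · rintro ⟨h0', hs⟩
          have hc : c = a q := by
            simpa [Equiv.Perm.decomposeFin_symm_apply_zero] using h0'
          refine ⟨hc, funext fun i => ?_⟩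
          have hi := hs i
          rw [Function.comp_apply, Equiv.Perm.decomposeFin_symm_apply_succ] at hi
          by_cases hei : e i = q
          · rw [hei, Equiv.swap_apply_right] at hi
            simpa [hc, hei] using hi
          · rw [Equiv.swap_apply_of_ne_of_ne (Fin.succ_ne_zero _)
              (fun h => hei (Fin.succ_injective _ h))] at hi
            simpa using hi
        · rintro ⟨hc, hbe⟩
          constructor
          · simpa [Equiv.Perm.decomposeFin_symm_apply_zero] using hc
          · intro i
            rw [Function.comp_apply, Equiv.Perm.decomposeFin_symm_apply_succ]
            by_cases hei : e i = q
            · rw [hei, Equiv.swap_apply_right]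
              simp only [Fin.cons_zero]
              rw [hc, ← hei]
              exact congrFun hbe i
            · rw [Equiv.swap_apply_of_ne_of_ne (Fin.succ_ne_zero _)
                (fun h => hei (Fin.succ_injective _ h))]
              simp only [Fin.cons_succ]
              exact congrFun hbe i
      rw [Finset.sum_comm]
      have h2 : ∀ e : Equiv.Perm (Fin κ), ∑ c : Fin N,
          ((Equiv.Perm.sign (Equiv.Perm.decomposeFin.symm (q.succ, e)) : ℤ) : ℂ) *
          (if Fin.cons c b = Fin.cons c a ∘ (Equiv.Perm.decomposeFin.symm (q.succ, e))
            then 1 else 0)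
          = -(((Equiv.Perm.sign e : ℤ) : ℂ) * (if b = a ∘ e then 1 else 0)) := by
        intro e
        have hsgn : ((Equiv.Perm.sign (Equiv.Perm.decomposeFin.symm (q.succ, e)) : ℤ) : ℂ)
            = -((Equiv.Perm.sign e : ℤ) : ℂ) := by
          rw [Equiv.Perm.decomposeFin.symm_sign]
          simp [Fin.succ_ne_zero]
        have : ∀ c : Fin N,
            ((Equiv.Perm.sign (Equiv.Perm.decomposeFin.symm (q.succ, e)) : ℤ) : ℂ) *
            (if Fin.cons c b = Fin.cons c a ∘ (Equiv.Perm.decomposeFin.symm (q.succ, e))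
              then 1 else 0)
            = if c = a q then
                -(((Equiv.Perm.sign e : ℤ) : ℂ) * (if b = a ∘ e then 1 else 0)) else 0 := by
          intro c
          rw [if_congr (hcond c e) rfl rfl, hsgn, ite_and]
          by_cases hc : c = a q
          · by_cases hb : b = a ∘ ⇑e <;> simp [hc, hb]
          · simp [hc]
        rw [Finset.sum_congr rfl fun c _ => this c, Finset.sum_ite_eq' Finset.univ (a q)]
        simp
      rw [Finset.sum_congr rfl fun e _ => h2 e, Finset.sum_neg_distrib]
    rw [Finset.sum_congr rfl fun q (_ : q ∈ Finset.univ) => hq q, Finset.sum_const,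
      Finset.card_univ, Fintype.card_fin, nsmul_eq_mul]
    ring
  have hL : ∑ c : Fin N, Ask (κ+1) N (Fin.cons c b) (Fin.cons c a)
      = ((Nat.factorial (κ+1) : ℂ))⁻¹ * (((N:ℂ) - (κ:ℂ)) * S) := by
    rw [← key, Finset.mul_sum]
    refine Finset.sum_congr rfl fun c _ => ?_
    rw [Ask_apply]
  rw [hL, Ask_apply]
  have hfac : (Nat.factorial (κ+1) : ℂ) = ((κ:ℂ)+1) * (Nat.factorial κ : ℂ) := by
    rw [Nat.factorial_succ]
    push_cast
    ring
  rw [hfac, ← hS, mul_inv, div_eq_mul_inv]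
  ring

end AuxAsk

section PT

variable {R : Type*} [Ring R] [Algebra ℂ R]

/-- `∏_{j=0}^{d-1} (N - (k+j))/(k+j+1)` -/
def cfac (N k : ℕ) : ℕ → ℂ
  | 0 => 1
  | d+1 => (((N:ℂ) - ((k+d : ℕ):ℂ)) / (((k+d : ℕ):ℂ)+1)) * cfac N k d

lemma partial_trace (N k : ℕ) (d : ℕ)
    (G : (Fin k → Fin N) → (Fin k → Fin N) → R) :
    ∑ x : Fin (k+d) → Fin N, ∑ y : Fin (k+d) → Fin N,
      (if (∀ j : Fin (k+d), (j:ℕ) < d → x j = y j)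
        then G (fun r => x (r.addNat d)) (fun r => y (r.addNat d)) else 0)
        * algebraMap ℂ R (Ask (k+d) N y x)
    = cfac N k d • ∑ a : Fin k → Fin N, ∑ b : Fin k → Fin N,
        G a b * algebraMap ℂ R (Ask k N b a) := by
  induction d with
  | zero =>
    rw [cfac, one_smul]
    refine Finset.sum_congr rfl fun x _ => Finset.sum_congr rfl fun y _ => ?_
    rw [if_pos (fun j h => absurd h (Nat.not_lt_zero _))]
    have hx : ∀ x : Fin (k+0) → Fin N, (fun r : Fin k => x (r.addNat 0)) = x := by
      intro x
      funext r
      exact congrArg x (Fin.ext (Nat.add_zero _))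
    rw [hx, hx]
    rfl
  | succ d ih =>
    have hconsx : ∑ x : Fin (k+(d+1)) → Fin N, ∑ y : Fin (k+(d+1)) → Fin N,
        (if (∀ j : Fin (k+(d+1)), (j:ℕ) < d+1 → x j = y j)
          then G (fun r => x (r.addNat (d+1))) (fun r => y (r.addNat (d+1))) else 0)
          * algebraMap ℂ R (Ask (k+(d+1)) N y x)
        = ∑ cx : Fin N, ∑ x' : Fin (k+d) → Fin N, ∑ cy : Fin N, ∑ y' : Fin (k+d) → Fin N,
          (if (∀ j : Fin (k+(d+1)), (j:ℕ) < d+1 →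
                Fin.cons (α := fun _ => Fin N) cx x' j = Fin.cons (α := fun _ => Fin N) cy y' j)
            then G (fun r => Fin.cons (α := fun _ => Fin N) cx x' (r.addNat (d+1)))
                   (fun r => Fin.cons (α := fun _ => Fin N) cy y' (r.addNat (d+1))) else 0)
            * algebraMap ℂ R (Ask (k+(d+1)) N (Fin.cons (α := fun _ => Fin N) cy y') (Fin.cons (α := fun _ => Fin N) cx x')) := by
      rw [← Equiv.sum_comp (κ := Fin (k+(d+1)) → Fin N)
        (Fin.consEquiv (fun _ : Fin (k+d+1) => Fin N)), Fintype.sum_prod_type]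
      refine Finset.sum_congr rfl fun cx _ => Finset.sum_congr rfl fun x' _ => ?_
      rw [← Equiv.sum_comp (κ := Fin (k+(d+1)) → Fin N)
        (Fin.consEquiv (fun _ : Fin (k+d+1) => Fin N)), Fintype.sum_prod_type]
      rfl
    rw [hconsx]
    have hcond : ∀ (cx : Fin N) (x' : Fin (k+d) → Fin N) (cy : Fin N)
        (y' : Fin (k+d) → Fin N),
        (∀ j : Fin (k+(d+1)), (j:ℕ) < d+1 → Fin.cons (α := fun _ => Fin N) cx x' j = Fin.cons (α := fun _ => Fin N) cy y' j)
          ↔ (cx = cy ∧ ∀ j : Fin (k+d), (j:ℕ) < d → x' j = y' j) := by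
      intro cx x' cy y'
      constructor
      · intro h
        refine ⟨by simpa using h (0 : Fin (k+d+1)) (Nat.succ_pos _), fun j hj => ?_⟩
        have := h j.succ (by simpa [Fin.val_succ] using Nat.succ_lt_succ hj)
        simpa using this
      · rintro ⟨hc, h⟩ j hj
        have hj' : ∀ j' : Fin ((k+d)+1), (j':ℕ) < d+1 →
            Fin.cons (α := fun _ => Fin N) cx x' j' = Fin.cons (α := fun _ => Fin N) cy y' j' := by
          intro j' hjv
          induction j' using Fin.cases with
          | zero => simpa using hc
          | succ i =>
            have : (i:ℕ) < d := by simpa [Fin.val_succ] using hjv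
            simpa using h i this
        exact hj' j hj
    have hargs : ∀ (c : Fin N) (x' : Fin (k+d) → Fin N),
        (fun r : Fin k => Fin.cons (α := fun _ => Fin N) c x' (r.addNat (d+1)))
          = fun r => x' (r.addNat d) := by
      intro c x'
      funext r
      have : (r.addNat (d+1)) = Fin.succ (r.addNat d) := Fin.ext rfl
      rw [this, Fin.cons_succ]
    have hcollapse : ∀ (cx : Fin N) (x' y' : Fin (k+d) → Fin N),
        (∑ cy : Fin N,
          (if (∀ j : Fin (k+(d+1)), (j:ℕ) < d+1 → Fin.cons (α := fun _ => Fin N) cx x' j = Fin.cons (α := fun _ => Fin N) cy y' j)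
            then G (fun r => Fin.cons (α := fun _ => Fin N) cx x' (r.addNat (d+1)))
                   (fun r => Fin.cons (α := fun _ => Fin N) cy y' (r.addNat (d+1))) else 0)
            * algebraMap ℂ R (Ask (k+(d+1)) N (Fin.cons (α := fun _ => Fin N) cy y') (Fin.cons (α := fun _ => Fin N) cx x')))
        = (if (∀ j : Fin (k+d), (j:ℕ) < d → x' j = y' j)
            then G (fun r => x' (r.addNat d)) (fun r => y' (r.addNat d)) else 0)
            * algebraMap ℂ R (Ask (k+(d+1)) N (Fin.cons (α := fun _ => Fin N) cx y') (Fin.cons (α := fun _ => Fin N) cx x')) := by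
      intro cx x' y'
      have hterm : ∀ cy : Fin N,
          (if (∀ j : Fin (k+(d+1)), (j:ℕ) < d+1 → Fin.cons (α := fun _ => Fin N) cx x' j = Fin.cons (α := fun _ => Fin N) cy y' j)
            then G (fun r => Fin.cons (α := fun _ => Fin N) cx x' (r.addNat (d+1)))
                   (fun r => Fin.cons (α := fun _ => Fin N) cy y' (r.addNat (d+1))) else 0)
            * algebraMap ℂ R (Ask (k+(d+1)) N (Fin.cons (α := fun _ => Fin N) cy y') (Fin.cons (α := fun _ => Fin N) cx x'))
          = if cy = cx then
              ((if (∀ j : Fin (k+d), (j:ℕ) < d → x' j = y' j)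
                then G (fun r => x' (r.addNat d)) (fun r => y' (r.addNat d)) else 0)
                * algebraMap ℂ R (Ask (k+(d+1)) N (Fin.cons (α := fun _ => Fin N) cy y') (Fin.cons (α := fun _ => Fin N) cx x')))
            else 0 := by
        intro cy
        rw [if_congr (hcond cx x' cy y') rfl rfl, hargs, hargs]
        by_cases hc : cy = cx
        · subst hc
          simp only [if_pos rfl, true_and]
          rw [if_pos trivial]
        · have : ¬ (cx = cy ∧ ∀ j : Fin (k+d), (j:ℕ) < d → x' j = y' j) := by
            rintro ⟨h1, _⟩; exact hc h1.symm
          rw [if_neg this, zero_mul, if_neg hc]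
      rw [Finset.sum_congr rfl fun cy _ => hterm cy,
        Finset.sum_ite_eq' Finset.univ cx, if_pos (Finset.mem_univ _)]
    rw [Finset.sum_congr rfl fun cx _ => Finset.sum_congr rfl fun x' _ =>
      Finset.sum_comm.symm]
    -- now: ∑ cx ∑ x' ∑ y' ∑ cy ...
    rw [Finset.sum_congr rfl fun cx (_ : cx ∈ Finset.univ) =>
      Finset.sum_congr rfl fun x' _ => Finset.sum_congr rfl fun y' _ => hcollapse cx x' y']
    -- now: ∑ cx ∑ x' ∑ y'  A(x',y') * alg (Ask (cons cx y') (cons cx x'))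
    rw [Finset.sum_comm]
    have hinner : ∀ x' : Fin (k+d) → Fin N,
        (∑ y' : Fin (k+d) → Fin N, ∑ cx : Fin N,
          (if (∀ j : Fin (k+d), (j:ℕ) < d → x' j = y' j)
            then G (fun r => x' (r.addNat d)) (fun r => y' (r.addNat d)) else 0)
            * algebraMap ℂ R (Ask (k+(d+1)) N (Fin.cons (α := fun _ => Fin N) cx y') (Fin.cons (α := fun _ => Fin N) cx x')))
        = ∑ y' : Fin (k+d) → Fin N,
            (((N:ℂ) - ((k+d : ℕ):ℂ)) / (((k+d : ℕ):ℂ)+1)) •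
            ((if (∀ j : Fin (k+d), (j:ℕ) < d → x' j = y' j)
              then G (fun r => x' (r.addNat d)) (fun r => y' (r.addNat d)) else 0)
              * algebraMap ℂ R (Ask (k+d) N y' x')) := by
      intro x'
      refine Finset.sum_congr rfl fun y' _ => ?_
      rw [← Finset.mul_sum, ← map_sum]
      have hAsk : (∑ c : Fin N, Ask (k+(d+1)) N (Fin.cons (α := fun _ => Fin N) c y')
            (Fin.cons (α := fun _ => Fin N) c x'))
          = (((N:ℂ) - ((k+d : ℕ):ℂ)) / (((k+d : ℕ):ℂ)+1)) * Ask (k+d) N y' x' :=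
        Ask_cons_sum x' y'
      set A := (if (∀ j : Fin (k+d), (j:ℕ) < d → x' j = y' j)
          then G (fun r => x' (r.addNat d)) (fun r => y' (r.addNat d)) else 0) with hA
      set s : ℂ := (((N:ℂ) - ((k+d : ℕ):ℂ)) / (((k+d : ℕ):ℂ)+1)) with hs
      rw [hAsk, map_mul, ← mul_assoc, ← Algebra.commutes s A, mul_assoc, ← Algebra.smul_def]
    have hstep : ∀ x' : Fin (k+d) → Fin N,
        (∑ cx : Fin N, ∑ y' : Fin (k+d) → Fin N,
          (if (∀ j : Fin (k+d), (j:ℕ) < d → x' j = y' j)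
            then G (fun r => x' (r.addNat d)) (fun r => y' (r.addNat d)) else 0)
            * algebraMap ℂ R (Ask (k+(d+1)) N (Fin.cons (α := fun _ => Fin N) cx y')
                (Fin.cons (α := fun _ => Fin N) cx x')))
        = ∑ y' : Fin (k+d) → Fin N,
            (((N:ℂ) - ((k+d : ℕ):ℂ)) / (((k+d : ℕ):ℂ)+1)) •
            ((if (∀ j : Fin (k+d), (j:ℕ) < d → x' j = y' j)
              then G (fun r => x' (r.addNat d)) (fun r => y' (r.addNat d)) else 0)
              * algebraMap ℂ R (Ask (k+d) N y' x')) := by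
      intro x'
      rw [Finset.sum_comm]
      exact hinner x'
    rw [Finset.sum_congr rfl fun x' (_ : x' ∈ Finset.univ) => hstep x']
    rw [Finset.sum_congr rfl fun x' (_ : x' ∈ Finset.univ) => (Finset.smul_sum).symm,
      ← Finset.smul_sum, ih, smul_smul]
    rfl

end PT
section Shifts

variable {R : Type*} [Ring R] [Algebra ℂ R] {N : ℕ}

/-- pair each list entry with a shifted spectral parameter -/
def shifts {ι : Type*} (W : ℂ → Matrix (Fin N) (Fin N) R) :
    List ι → ℂ → List (ι × Matrix (Fin N) (Fin N) R)
  | [], _ => []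
  | p :: T, u => (p, W u) :: shifts W T (u - 1)

lemma shifts_map {ι ι' : Type*} (W : ℂ → Matrix (Fin N) (Fin N) R) (f : ι → ι')
    (l : List ι) (u : ℂ) :
    shifts W (l.map f) u = (shifts W l u).map fun s => (f s.1, s.2) := by
  induction l generalizing u with
  | nil => simp [shifts]
  | cons p T ih => simp [shifts, ih]

lemma shifts_fst {ι : Type*} (W : ℂ → Matrix (Fin N) (Fin N) R) (l : List ι) (u : ℂ) :
    (shifts W l u).map Prod.fst = l := by
  induction l generalizing u with
  | nil => simp [shifts]
  | cons p T ih => simp [shifts, ih]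

lemma shifts_finRange (W : ℂ → Matrix (Fin N) (Fin N) R) (κ : ℕ) (u : ℂ) :
    shifts W (List.finRange κ) u
      = (List.finRange κ).map fun (r : Fin κ) => (r, W (u - ((r : ℕ) : ℂ))) := by
  induction κ generalizing u with
  | zero => simp [shifts]
  | succ κ ih =>
    rw [List.finRange_succ, shifts, shifts_map, ih]
    simp only [List.map_cons, List.map_map]
    congr 1
    · simp
    · refine List.map_congr_left fun r _ => ?_
      simp only [Function.comp_apply]
      congr 2
      push_cast [Fin.val_succ]
      ring

lemma sgn_prodShift {m : ℕ} (Qm : Matrix (Fin N) (Fin N) R) (Tm : ℂ → Matrix (Fin N) (Fin N) R)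
    (T : List (Fin m)) (u : ℂ) :
    prodShift (T.map fun i => fun v => -(emb1 i Qm * emb1 i (Tm v))) u
      = ((-1 : ℂ)^T.length) •
          ((shifts (fun v => Qm * Tm v) T u).map fun s => emb1 s.1 s.2).prod := by
  induction T generalizing u with
  | nil => simp [prodShift, shifts]
  | cons p T ih =>
    rw [List.map_cons]
    show (-(emb1 p Qm * emb1 p (Tm u))) *
        prodShift (T.map fun i => fun v => -(emb1 i Qm * emb1 i (Tm v))) (u - 1) = _
    rw [ih, emb1_mul, shifts]
    rw [List.map_cons, List.prod_cons]
    rw [mul_smul_comm, neg_mul, smul_neg, List.length_cons, pow_succ, mul_neg_one, neg_smul]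

lemma distf (κ : ℕ) (f : Fin κ → Fin N → R) :
    ((List.finRange κ).map fun i => ∑ c : Fin N, f i c).prod
      = ∑ y : Fin κ → Fin N, ((List.finRange κ).map fun i => f i (y i)).prod := by
  induction κ with
  | zero =>
    simp
  | succ κ ih =>
    rw [List.finRange_succ]
    simp only [List.map_cons, List.prod_cons, List.map_map, Function.comp_def]
    rw [ih (fun i c => f i.succ c), Finset.sum_mul_sum]
    rw [← Equiv.sum_comp (Fin.consEquiv fun _ => Fin N), Fintype.sum_prod_type]
    refine Finset.sum_congr rfl fun c _ => Finset.sum_congr rfl fun y' _ => ?_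
    simp [Fin.consEquiv_apply]

lemma pull_alg {ι : Type*} (l : List ι) (φ : ι → ℂ) (ψ : ι → R) :
    (l.map fun i => algebraMap ℂ R (φ i) * ψ i).prod
      = algebraMap ℂ R (l.map φ).prod * (l.map ψ).prod := by
  induction l with
  | nil => simp
  | cons a t ih =>
    simp only [List.map_cons, List.prod_cons, map_mul]
    rw [ih, ← mul_assoc, mul_assoc (algebraMap ℂ R (φ a)) (ψ a) _,
      ← Algebra.commutes ((t.map φ).prod) (ψ a), ← mul_assoc, ← mul_assoc, ← map_mul,
      mul_assoc]

end Shifts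
lemma exists_perm_comp {α β : Type*} [Fintype β] [DecidableEq β] (f g : α → β)
    (hf : Function.Injective f) (hg : Function.Injective g) :
    ∃ σ : Equiv.Perm β, ∀ r, σ (g r) = f r := by
  classical
  refine ⟨Equiv.extendSubtype
    (((Equiv.ofInjective g hg).symm.trans (Equiv.ofInjective f hf)) :
      {x // x ∈ Set.range g} ≃ {x // x ∈ Set.range f}), fun r => ?_⟩
  rw [Equiv.extendSubtype_apply_of_mem _ _ ⟨r, rfl⟩]
  have h1 : (Equiv.ofInjective g hg).symm ⟨g r, ⟨r, rfl⟩⟩ = r := by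
    rw [Equiv.symm_apply_eq]
    rfl
  simp only [Equiv.trans_apply]
  rw [h1]
  rfl

section AuxTrace

set_option linter.unusedSectionVars false
set_option maxHeartbeats 1000000

variable {R : Type*} [Ring R] [Algebra ℂ R] {N : ℕ}

lemma fin_addNat_injective (k d : ℕ) :
    Function.Injective (fun r : Fin k => Fin.addNat r d) := by
  intro r1 r2 h
  have := congrArg Fin.val h
  simp only [Fin.addNat] at this
  exact Fin.ext (by omega)

lemma trace_embP (k d : ℕ) (W : ℂ → Matrix (Fin N) (Fin N) R)
    (t : Fin k → Fin (k+d)) (ht : Function.Injective t) (u : ℂ) :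
    Matrix.trace ((((shifts W ((List.finRange k).map t) u).map fun s => emb1 s.1 s.2).prod)
        * (Ask (k+d) N).map (algebraMap ℂ R))
      = cfac N k d • ∑ a : Fin k → Fin N, ∑ b : Fin k → Fin N,
          ((List.finRange k).map fun (r : Fin k) => W (u - ((r:ℕ):ℂ)) (a r) (b r)).prod
            * algebraMap ℂ R (Ask k N b a) := by
  classical
  have hpairs : shifts W ((List.finRange k).map t) u
      = (List.finRange k).map fun (r : Fin k) => (t r, W (u - ((r:ℕ):ℂ))) := by
    rw [shifts_map, shifts_finRange, List.map_map]
    rfl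
  have hfst : (((List.finRange k).map fun (r : Fin k) => (t r, W (u - ((r:ℕ):ℂ)))).map Prod.fst)
      = (List.finRange k).map t := by
    rw [List.map_map]
    rfl
  have hnd : (((List.finRange k).map fun (r : Fin k) => (t r, W (u - ((r:ℕ):ℂ)))).map Prod.fst).Nodup := by
    rw [hfst]
    exact (List.nodup_finRange k).map ht
  rw [trace_mul_sum_form]
  have hAB : ∀ x y : Fin (k+d) → Fin N,
      (((shifts W ((List.finRange k).map t) u).map fun s => emb1 s.1 s.2).prod) x y
        * ((Ask (k+d) N).map (algebraMap ℂ R)) y x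
      = (if (∀ j, (∀ r, t r ≠ j) → x j = y j)
          then ((List.finRange k).map fun (r : Fin k) => W (u - ((r:ℕ):ℂ)) (x (t r)) (y (t r))).prod
          else 0) * algebraMap ℂ R (Ask (k+d) N y x) := by
    intro x y
    rw [hpairs, prod_emb1_apply _ hnd, Matrix.map_apply]
    congr 1
    have hc : (∀ j, j ∉ (((List.finRange k).map fun (r : Fin k) =>
          (t r, W (u - ((r:ℕ):ℂ)))).map Prod.fst) → x j = y j)
        ↔ (∀ j, (∀ r, t r ≠ j) → x j = y j) := by
      rw [hfst]
      refine forall_congr' fun j => imp_congr ?_ Iff.rfl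
      simp [List.mem_map]
    refine if_congr hc ?_ rfl
    rw [List.map_map]
    rfl
  rw [Finset.sum_congr rfl fun x _ => Finset.sum_congr rfl fun y _ => hAB x y]
  obtain ⟨σ, hσ⟩ := exists_perm_comp (fun r : Fin k => Fin.addNat r d) t
    (fin_addNat_injective k d) ht
  have hbij : Function.Bijective (fun x : Fin (k+d) → Fin N => x ∘ ⇑σ) :=
    σ.bijective.comp_right
  have hoffrange : ∀ j : Fin (k+d), (∀ r, t r ≠ j) → ((σ j : ℕ) < d) := by
    intro j hj
    by_contra hge
    push_neg at hge
    have hlt : (σ j : ℕ) - d < k := by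
      have := (σ j).isLt
      omega
    have : σ (t ⟨(σ j : ℕ) - d, hlt⟩) = σ j := by
      rw [hσ]
      exact Fin.ext (by simp [Fin.addNat]; omega)
    exact hj _ (σ.injective this)
  have honrange : ∀ j : Fin (k+d), ((σ j : ℕ) < d) → (∀ r, t r ≠ j) := by
    intro j hjlt r hr
    have : σ (t r) = σ j := congrArg σ hr
    rw [hσ] at this
    have := congrArg Fin.val this
    simp [Fin.addNat] at this
    omega
  have hcond : ∀ x y : Fin (k+d) → Fin N,
      (∀ j, (∀ r, t r ≠ j) → (x ∘ ⇑σ) j = (y ∘ ⇑σ) j)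
        ↔ (∀ j : Fin (k+d), (j:ℕ) < d → x j = y j) := by
    intro x y
    constructor
    · intro h j' hj'
      have h1 : ∀ r, t r ≠ σ.symm j' := by
        intro r hr
        have : σ (t r) = j' := by rw [hr]; simp
        rw [hσ] at this
        have := congrArg Fin.val this
        simp [Fin.addNat] at this
        omega
      have := h (σ.symm j') h1
      simpa using this
    · intro h j hj
      exact h (σ j) (hoffrange j hj)
  have hptws : ∀ x y : Fin (k+d) → Fin N,
      (if (∀ j : Fin (k+d), (j:ℕ) < d → x j = y j)
        then ((List.finRange k).map fun (r : Fin k) =>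
          W (u - ((r:ℕ):ℂ)) (x (Fin.addNat r d)) (y (Fin.addNat r d))).prod else 0)
        * algebraMap ℂ R (Ask (k+d) N y x)
      = (if (∀ j, (∀ r, t r ≠ j) → (x ∘ ⇑σ) j = (y ∘ ⇑σ) j)
          then ((List.finRange k).map fun (r : Fin k) =>
            W (u - ((r:ℕ):ℂ)) ((x ∘ ⇑σ) (t r)) ((y ∘ ⇑σ) (t r))).prod
          else 0) * algebraMap ℂ R (Ask (k+d) N (y ∘ ⇑σ) (x ∘ ⇑σ)) := by
    intro x y
    rw [Ask_comp_perm σ y x]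
    congr 1
    rw [if_congr (hcond x y) rfl rfl]
    refine if_congr Iff.rfl ?_ rfl
    refine congrArg List.prod (List.map_congr_left fun r _ => ?_)
    have hx : (x ∘ ⇑σ) (t r) = x (Fin.addNat r d) := by
      simp only [Function.comp_apply]
      rw [hσ]
    have hy : (y ∘ ⇑σ) (t r) = y (Fin.addNat r d) := by
      simp only [Function.comp_apply]
      rw [hσ]
    rw [hx, hy]
  have hre : (∑ x : Fin (k+d) → Fin N, ∑ y : Fin (k+d) → Fin N,
      (if (∀ j, (∀ r, t r ≠ j) → x j = y j)
        then ((List.finRange k).map fun (r : Fin k) => W (u - ((r:ℕ):ℂ)) (x (t r)) (y (t r))).prod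
        else 0) * algebraMap ℂ R (Ask (k+d) N y x))
      = ∑ x : Fin (k+d) → Fin N, ∑ y : Fin (k+d) → Fin N,
        (if (∀ j : Fin (k+d), (j:ℕ) < d → x j = y j)
          then ((List.finRange k).map fun (r : Fin k) =>
            W (u - ((r:ℕ):ℂ)) (x (Fin.addNat r d)) (y (Fin.addNat r d))).prod else 0)
          * algebraMap ℂ R (Ask (k+d) N y x) := by
    refine (Fintype.sum_bijective _ hbij _ _ fun x => ?_).symm
    refine Fintype.sum_bijective _ hbij _ _ fun y => ?_
    exact hptws x y
  rw [hre]
  exact partial_trace N k d (fun a b =>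
    ((List.finRange k).map fun (r : Fin k) => W (u - ((r:ℕ):ℂ)) (a r) (b r)).prod)

lemma cfac_eq (k d : ℕ) (hN : k + d ≤ N) :
    cfac N k d = ((N-k).factorial : ℂ) * (k.factorial : ℂ)
      / (((N-(k+d)).factorial : ℂ) * ((k+d).factorial : ℂ)) := by
  induction d with
  | zero =>
    rw [cfac]
    have h1 : ((N-k).factorial : ℂ) ≠ 0 := Nat.cast_ne_zero.mpr (Nat.factorial_ne_zero _)
    have h2 : ((k.factorial : ℕ) : ℂ) ≠ 0 := Nat.cast_ne_zero.mpr (Nat.factorial_ne_zero _)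
    rw [Nat.add_zero]
    field_simp
  | succ d ih =>
    have hkd : k + d ≤ N := by omega
    rw [cfac, ih hkd]
    have hsub : ((N:ℂ) - ((k+d : ℕ):ℂ)) = (((N - (k+d) : ℕ)):ℂ) := by
      rw [Nat.cast_sub hkd]
    have e1 : N - (k+d) = (N - (k+(d+1))) + 1 := by omega
    have e3 : ((N - (k+d)).factorial : ℂ)
        = ((N - (k+d) : ℕ) : ℂ) * ((N - (k+(d+1))).factorial : ℂ) := by
      rw [e1, Nat.factorial_succ]
      push_cast
      ring
    have e4 : (((k+(d+1))).factorial : ℂ)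
        = (((k+d : ℕ) : ℂ) + 1) * (((k+d)).factorial : ℂ) := by
      rw [show k+(d+1) = (k+d)+1 from rfl, Nat.factorial_succ]
      push_cast
      ring
    rw [hsub, e3, e4]
    have h1 : ((N - (k+d) : ℕ) : ℂ) ≠ 0 := Nat.cast_ne_zero.mpr (by omega)
    have h2 : (((k+d : ℕ) : ℂ) + 1) ≠ 0 := Nat.cast_add_one_ne_zero _
    have h3 : ((N - (k+(d+1))).factorial : ℂ) ≠ 0 :=
      Nat.cast_ne_zero.mpr (Nat.factorial_ne_zero _)
    have h4 : (((k+d)).factorial : ℂ) ≠ 0 := Nat.cast_ne_zero.mpr (Nat.factorial_ne_zero _)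
    have h5 : ((N - k).factorial : ℂ) ≠ 0 := Nat.cast_ne_zero.mpr (Nat.factorial_ne_zero _)
    have h6 : ((k).factorial : ℂ) ≠ 0 := Nat.cast_ne_zero.mpr (Nat.factorial_ne_zero _)
    set a : ℂ := ((N - (k+d) : ℕ) : ℂ)
    set bb : ℂ := ((k+d : ℕ) : ℂ)
    set A : ℂ := ((N - (k+(d+1))).factorial : ℂ)
    set B : ℂ := (((k+d)).factorial : ℂ)
    set C : ℂ := ((N - k).factorial : ℂ)
    set D : ℂ := ((k).factorial : ℂ)
    field_simp

lemma choose_cfac (k d : ℕ) (hN : k + d ≤ N) :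
    ((Nat.choose (k+d) k : ℕ) : ℂ) * cfac N k d
      = (((N - (k+d)).factorial : ℂ))⁻¹ * (((N-k).factorial : ℂ) / ((d).factorial : ℂ)) := by
  rw [cfac_eq k d hN]
  have hc : ((Nat.choose (k+d) k : ℕ) : ℂ) * (k.factorial : ℂ) * ((d).factorial : ℂ)
      = (((k+d).factorial : ℕ) : ℂ) := by
    have := Nat.choose_mul_factorial_mul_factorial (Nat.le_add_right k d)
    have h2 : (k + d - k) = d := by omega
    rw [h2] at this
    exact_mod_cast congrArg (Nat.cast : ℕ → ℂ) this
  have hne1 : ((N - (k+d)).factorial : ℂ) ≠ 0 := Nat.cast_ne_zero.mpr (Nat.factorial_ne_zero _)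
  have hne2 : (((k+d).factorial : ℕ) : ℂ) ≠ 0 := Nat.cast_ne_zero.mpr (Nat.factorial_ne_zero _)
  have hne3 : ((k.factorial : ℕ) : ℂ) ≠ 0 := Nat.cast_ne_zero.mpr (Nat.factorial_ne_zero _)
  have hne4 : ((d.factorial : ℕ) : ℂ) ≠ 0 := Nat.cast_ne_zero.mpr (Nat.factorial_ne_zero _)
  field_simp
  rw [← hc]
  ring

end AuxTrace

section MainAux

set_option linter.unusedSectionVars false
set_option maxHeartbeats 1000000

variable {N n : ℕ}
variable (M : Fin n → Type*) [∀ i, AddCommGroup (M i)] [∀ i, Module ℂ (M i)]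
variable (ρ : ∀ i, gl N →ₗ⁅ℂ⁆ Module.End ℂ (M i))
variable (z : Fin n → ℂ)

lemma transferT_eq (Q : gl N) (k : ℕ) (u : ℂ) :
    transferT M ρ z Q k u
      = ∑ a : Fin k → Fin N, ∑ b : Fin k → Fin N,
        ((List.finRange k).map fun (r : Fin k) =>
          (Q.map (algebraMap ℂ (Module.End ℂ (⨂[ℂ] j, M j)))
            * Tmat M ρ z (u - ((r:ℕ):ℂ))) (a r) (b r)).prod
        * algebraMap ℂ (Module.End ℂ (⨂[ℂ] j, M j)) (Ask k N b a) := by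
  classical
  rw [transferT, trace_mul_sum_form]
  refine Finset.sum_congr rfl fun a _ => Finset.sum_congr rfl fun b _ => ?_
  rw [Matrix.map_apply]
  congr 1
  have hfst : (((List.finRange k).map fun (r : Fin k) =>
        ((r : Fin k), Tmat M ρ z (u - ((r:ℕ):ℂ)))).map Prod.fst) = List.finRange k := by
    rw [List.map_map]
    rw [show (Prod.fst ∘ fun (r : Fin k) => (r, Tmat M ρ z (u - ((r:ℕ):ℂ)))) = id from rfl,
      List.map_id]
  have hP : ∀ y c : Fin k → Fin N,
      (((List.finRange k).map fun (r : Fin k) => emb1 r (Tmat M ρ z (u - ((r:ℕ):ℂ)))).prod) y c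
        = ((List.finRange k).map fun (r : Fin k) =>
            Tmat M ρ z (u - ((r:ℕ):ℂ)) (y r) (c r)).prod := by
    intro y c
    have h1 : ((List.finRange k).map fun (r : Fin k) => emb1 r (Tmat M ρ z (u - ((r:ℕ):ℂ))))
        = (((List.finRange k).map fun (r : Fin k) =>
            ((r : Fin k), Tmat M ρ z (u - ((r:ℕ):ℂ)))).map fun s => emb1 s.1 s.2) := by
      rw [List.map_map]
      rfl
    rw [h1, prod_emb1_apply _ (by rw [hfst]; exact List.nodup_finRange k) y c,
      if_pos (fun j hj => absurd (show j ∈ _ by rw [hfst]; exact List.mem_finRange j) hj),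
      List.map_map]
    rfl
  have hgoal2 : ((List.finRange k).map fun (r : Fin k) =>
      (Q.map (algebraMap ℂ (Module.End ℂ (⨂[ℂ] j, M j)))
        * Tmat M ρ z (u - ((r:ℕ):ℂ))) (a r) (b r)).prod
      = ∑ y : Fin k → Fin N,
          algebraMap ℂ (Module.End ℂ (⨂[ℂ] j, M j)) (∏ r, Q (a r) (y r))
            * ((List.finRange k).map fun (r : Fin k) =>
                Tmat M ρ z (u - ((r:ℕ):ℂ)) (y r) (b r)).prod := by
    rw [show ((List.finRange k).map fun (r : Fin k) =>
        (Q.map (algebraMap ℂ (Module.End ℂ (⨂[ℂ] j, M j)))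
          * Tmat M ρ z (u - ((r:ℕ):ℂ))) (a r) (b r))
      = ((List.finRange k).map fun (r : Fin k) => ∑ c : Fin N,
          algebraMap ℂ (Module.End ℂ (⨂[ℂ] j, M j)) (Q (a r) c)
            * Tmat M ρ z (u - ((r:ℕ):ℂ)) c (b r)) from
      List.map_congr_left fun r _ => by
        rw [Matrix.mul_apply]
        exact Finset.sum_congr rfl fun c _ => by rw [Matrix.map_apply]]
    rw [distf k (fun r c => algebraMap ℂ (Module.End ℂ (⨂[ℂ] j, M j)) (Q (a r) c)
      * Tmat M ρ z (u - ((r:ℕ):ℂ)) c (b r))]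
    refine Finset.sum_congr rfl fun y _ => ?_
    rw [pull_alg (List.finRange k) (fun i => Q (a i) (y i))
      (fun i => Tmat M ρ z (u - ((i:ℕ):ℂ)) (y i) (b i)), ← Fin.prod_univ_def]
  rw [hgoal2, Matrix.mul_apply]
  refine Finset.sum_congr rfl fun y _ => ?_
  rw [hP y b]
  rfl

end MainAux

/-- Proposition 4.9, evaluation form: the identity of difference operators
`tr_{V^{⊗m}}[(1 − Q^{(1)} T^{(1)}(u;z) e^{−∂_u}) ⋯ (1 − Q^{(m)} T^{(m)}(u;z) e^{−∂_u}) (A^{(m)} ⊗ id)]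
 = (1/(N−m)!) Σ_{k=0}^m (−1)^k ((N−k)!/(m−k)!) 𝒯_{k,Q}(u;z) e^{−k∂_u}`,
stated by comparison of the coefficients of `e^{−k∂_u}` for every `k`, as `End(M)`-valued
rational functions of `u`. -/
theorem statement7 {N n : ℕ} (hN : 1 ≤ N)
    (M : Fin n → Type*) [∀ i, AddCommGroup (M i)] [∀ i, Module ℂ (M i)]
    (ρ : ∀ i, gl N →ₗ⁅ℂ⁆ Module.End ℂ (M i))
    (z : Fin n → ℂ) (hz : Function.Injective z)
    (m : ℕ) (hm1 : 1 ≤ m) (hmN : m ≤ N) (Q : gl N)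
    (k : ℕ) (u : ℂ) (hu : ∀ i : Fin n, ∀ j : ℕ, j ≤ m → u - (j : ℂ) ≠ z i) :
    Matrix.trace
      ((((List.finRange m).map fun i => dFactor M ρ z Q i).foldr dMul dOne) k u
        * (Ask m N).map (algebraMap ℂ (Module.End ℂ (⨂[ℂ] j, M j))))
    = if k ≤ m then
        (((N - m).factorial : ℂ)⁻¹ * (-1) ^ k *
            (((N - k).factorial : ℂ) / ((m - k).factorial : ℂ))) • transferT M ρ z Q k u
      else 0 := by
  classical
  by_cases hkm : k ≤ m
  · rw [if_pos hkm]
    obtain ⟨d, rfl⟩ : ∃ d, m = k + d := ⟨m - k, by omega⟩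
    have hmap : ((List.finRange (k+d)).map fun i => dFactor M ρ z Q i)
        = (((List.finRange (k+d)).map fun i => (fun v : ℂ =>
            -(emb1 i (Q.map (algebraMap ℂ (Module.End ℂ (⨂[ℂ] j, M j))))
              * emb1 i (Tmat M ρ z v)))).map toD) := by
      rw [List.map_map]
      rfl
    rw [hmap, foldr_eval, sublistsLen_map', List.map_map, trace_list_sum_mul, List.map_map]
    simp only [Function.comp_def]
    have hterm : ∀ T ∈ List.sublistsLen k (List.finRange (k+d)),
        Matrix.trace (prodShift (List.map (fun i => (fun v : ℂ =>
            -(emb1 i (Q.map (algebraMap ℂ (Module.End ℂ (⨂[ℂ] j, M j))))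
              * emb1 i (Tmat M ρ z v)))) T) u
          * (Ask (k+d) N).map (algebraMap ℂ (Module.End ℂ (⨂[ℂ] j, M j))))
        = (-1 : ℂ)^k • (cfac N k d •
            ∑ a : Fin k → Fin N, ∑ b : Fin k → Fin N,
              ((List.finRange k).map fun (r : Fin k) =>
                (Q.map (algebraMap ℂ (Module.End ℂ (⨂[ℂ] j, M j)))
                  * Tmat M ρ z (u - ((r:ℕ):ℂ))) (a r) (b r)).prod
              * algebraMap ℂ (Module.End ℂ (⨂[ℂ] j, M j)) (Ask k N b a)) := by
      intro T hT
      obtain ⟨hsub, hlen⟩ := List.mem_sublistsLen.mp hT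
      have hnd : T.Nodup := hsub.nodup (List.nodup_finRange _)
      have htfun : ∃ t : Fin k → Fin (k+d), Function.Injective t
          ∧ T = (List.finRange k).map t := by
        refine ⟨fun r => T.get ⟨r.val, by rw [hlen]; exact r.isLt⟩, ?_, ?_⟩
        · intro r1 r2 h
          have hinj := List.nodup_iff_injective_get.mp hnd h
          exact Fin.ext (by simpa using hinj)
        · refine List.ext_get (by simp [hlen]) fun i h1 h2 => ?_
          simp [List.getElem_map, List.get_finRange]
      obtain ⟨t, htinj, hTeq⟩ := htfun
      rw [sgn_prodShift (Q.map (algebraMap ℂ (Module.End ℂ (⨂[ℂ] j, M j)))) (Tmat M ρ z) T u,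
        hlen, Matrix.smul_mul, Matrix.trace_smul, hTeq,
        trace_embP k d (fun v => Q.map (algebraMap ℂ (Module.End ℂ (⨂[ℂ] j, M j)))
          * Tmat M ρ z v) t htinj u]
    rw [List.map_congr_left hterm, List.map_const', List.sum_replicate,
      List.length_sublistsLen, List.length_finRange]
    rw [transferT_eq M ρ z Q k u]
    rw [← Nat.cast_smul_eq_nsmul ℂ, smul_smul, smul_smul]
    congr 1
    have hsc := choose_cfac (N := N) k d hmN
    have hd : k + d - k = d := by omega
    rw [hd]
    linear_combination ((-1 : ℂ)^k) * hsc
  · rw [if_neg hkm]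
    have hmap : ((List.finRange m).map fun i => dFactor M ρ z Q i)
        = (((List.finRange m).map fun i => (fun v : ℂ =>
            -(emb1 i (Q.map (algebraMap ℂ (Module.End ℂ (⨂[ℂ] j, M j))))
              * emb1 i (Tmat M ρ z v)))).map toD) := by
      rw [List.map_map]
      rfl
    have h0 : ((((List.finRange m).map fun i => dFactor M ρ z Q i).foldr dMul dOne) k u)
        = 0 := by
      rw [hmap, foldr_eval, List.sublistsLen_of_length_lt
        (by simp only [List.length_map, List.length_finRange]; omega)]
      simp
    rw [h0, Matrix.zero_mul, Matrix.trace_zero]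


end BetheStatements
end
end

section
/- (Proposition 8.3, evaluation form) Let K = 0. Then for every k = 0,…,N, every u ∈ ℂ∖{z_1,…,z_n}, and every x ∈ gl_N, the Gaudin transfer matrix commutes with the diagonal gl_N-action on M: 𝒢_{k,0}(u;z) ∘ (Σ_{i=1}^n x^{(i)}) = (Σ_{i=1}^n x^{(i)}) ∘ 𝒢_{k,0}(u;z). -/
open scoped TensorProduct

noncomputable section

namespace BetheStatements

attribute [local instance 100] LieRing.ofAssociativeRing

section Jets

variable {S : Type*} [Ring S]

/-- Multiplication of jets (families of all derivatives at a point), by the Leibniz rule: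
`(F·G)^{(m)} = Σ_r C(m,r) F^{(r)} G^{(m−r)}`. -/
def jmul (F G : ℕ → S) : ℕ → S :=
  fun m => ∑ r ∈ Finset.range (m + 1), (m.choose r : S) * (F r * G (m - r))

/-- Composition of a first-order differential operator `∂_u − B(u)` with a differential
operator `E = Σ_j E_j(u) ∂_u^j` (the coefficients `E_j` are recorded together with all their
`u`-derivatives, i.e. as jets): `((∂−B)∘E)_j = E_j' + E_{j−1} − B·E_j`. -/
def jComp1 (B : ℕ → S) (Eo : ℕ → ℕ → S) : ℕ → ℕ → S :=
  fun j m => Eo j (m + 1) + (if j = 0 then 0 else Eo (j - 1) m) - jmul B (Eo j) m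

/-- The identity differential operator, as a jet-valued family of coefficients. -/
def jOne : ℕ → ℕ → S := fun j m => if j = 0 ∧ m = 0 then 1 else 0

end Jets

/-- The jet of the function `u ↦ (u−c)⁻¹`: its `m`-th derivative is
`(−1)^m m! (u−c)^{−m−1}`. -/
def invJet (u c : ℂ) (m : ℕ) : ℂ := (-1) ^ m * (m.factorial : ℂ) * ((u - c)⁻¹) ^ (m + 1)

section Gaudin

variable {N n : ℕ}
variable (M : Fin n → Type*) [∀ i, AddCommGroup (M i)] [∀ i, Module ℂ (M i)]
variable (ρ : ∀ i, gl N →ₗ⁅ℂ⁆ Module.End ℂ (M i))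
variable (z : Fin n → ℂ)

/-- The jet at the point `u` of the coefficient `K^{(a)} + ℒ^{(a)}(u;z)` of the `a`-th factor
`∂_u − K^{(a)} − ℒ^{(a)}(u;z)`, where `ℒ(u;z) = Σ_{a,b} E_{ab} ⊗ Σ_i e_{ba}^{(i)}/(u−z_i)`,
as a matrix over `End(M)` indexed by `Fin N → Fin N` (representing
`End(V^{⊗N}) ⊗ End(M)`). -/
def gaudinB (K : gl N) (u : ℂ) (a : Fin N) (m : ℕ) :
    Matrix (Fin N → Fin N) (Fin N → Fin N) (Module.End ℂ (⨂[ℂ] j, M j)) :=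
  (if m = 0 then emb1 a (K.map (algebraMap ℂ (Module.End ℂ (⨂[ℂ] j, M j)))) else 0)
    + ∑ i : Fin n, invJet u (z i) m • emb1 a (Matrix.of fun p q => act M ρ i (matE N q p))

/-- The composition `(∂_u − K^{(1)} − ℒ^{(1)}(u;z)) ⋯ (∂_u − K^{(N)} − ℒ^{(N)}(u;z))`:
`gaudinComp M ρ z K u j m` is the `m`-th `u`-derivative of the coefficient of `∂_u^j`. -/
def gaudinComp (K : gl N) (u : ℂ) :
    ℕ → ℕ → Matrix (Fin N → Fin N) (Fin N → Fin N) (Module.End ℂ (⨂[ℂ] j, M j)) :=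
  ((List.finRange N).map fun a => gaudinB M ρ z K u a).foldr jComp1 jOne

/-- The Gaudin transfer matrices `𝒢_{k,K}(u;z) ∈ End(M)`, defined by the expansion
`tr_{V^{⊗N}}[(∂_u − K^{(1)} − ℒ^{(1)}(u;z)) ⋯ (∂_u − K^{(N)} − ℒ^{(N)}(u;z)) (A^{(N)} ⊗ id)]
 = Σ_{k=0}^N (−1)^k 𝒢_{k,K}(u;z) ∂_u^{N−k}`. -/
def gaudinG (K : gl N) (k : ℕ) (u : ℂ) : Module.End ℂ (⨂[ℂ] j, M j) :=
  (-1 : ℂ) ^ k • Matrix.trace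
    (gaudinComp M ρ z K u (N - k) 0
      * (Ask N N).map (algebraMap ℂ (Module.End ℂ (⨂[ℂ] j, M j))))

end Gaudin

section AuxMatrix

variable {A : Type*} [Ring A] {N k : ℕ}

lemma emb1_zero (p : Fin k) : emb1 p (0 : Matrix (Fin N) (Fin N) A) = 0 := by
  ext x y
  simp only [emb1, Matrix.of_apply, Matrix.zero_apply]
  split <;> rfl

lemma emb1_map {B : Type*} [Ring B] (f : A →+* B) (p : Fin k) (X : Matrix (Fin N) (Fin N) A) :
    emb1 p (X.map f) = (emb1 p X).map f := by
  ext x y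
  simp only [emb1, Matrix.map_apply, Matrix.of_apply]
  split <;> simp

lemma emb1_mul_apply (p : Fin k) (X : Matrix (Fin N) (Fin N) A)
    (T : Matrix (Fin k → Fin N) (Fin k → Fin N) A) (x y : Fin k → Fin N) :
    (emb1 p X * T) x y = ∑ c, X (x p) c * T (Function.update x p c) y := by
  classical
  rw [Matrix.mul_apply]
  have h0 : ∀ w ∈ (Finset.univ : Finset (Fin k → Fin N)),
      w ∉ (Finset.univ : Finset (Fin N)).image (Function.update x p) →
      emb1 p X x w * T w y = 0 := by
    intro w _ hw
    have hcond : ¬ ∀ j, j ≠ p → x j = w j := by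
      intro hc
      refine hw (Finset.mem_image.mpr ⟨w p, Finset.mem_univ _, funext fun j => ?_⟩)
      by_cases hj : j = p
      · subst hj; simp
      · rw [Function.update_of_ne hj]; exact hc j hj
    simp only [emb1, Matrix.of_apply]
    rw [if_neg hcond, zero_mul]
  rw [← Finset.sum_subset (Finset.subset_univ _) h0]
  rw [Finset.sum_image (fun a _ b _ h => Function.update_injective x p h)]
  refine Finset.sum_congr rfl fun c _ => ?_
  congr 1
  simp only [emb1, Matrix.of_apply]
  rw [if_pos, Function.update_self]
  intro j hj
  rw [Function.update_of_ne hj]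

lemma emb1_mul_emb1 (p : Fin k) (X Z : Matrix (Fin N) (Fin N) A) :
    emb1 p X * emb1 p Z = emb1 p (X * Z) := by
  ext x y
  rw [emb1_mul_apply]
  simp only [emb1, Matrix.of_apply, Matrix.mul_apply]
  by_cases h : ∀ j, j ≠ p → x j = y j
  · rw [if_pos h]
    refine Finset.sum_congr rfl fun c _ => ?_
    rw [if_pos, Function.update_self]
    intro j hj
    rw [Function.update_of_ne hj]
    exact h j hj
  · rw [if_neg h]
    refine Finset.sum_eq_zero fun c _ => ?_
    rw [if_neg, mul_zero]
    intro hc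
    refine h fun j hj => ?_
    have := hc j hj
    rwa [Function.update_of_ne hj] at this

lemma emb1_mul_emb1_ne_apply {p q : Fin k} (hpq : p ≠ q) (X Z : Matrix (Fin N) (Fin N) A)
    (x y : Fin k → Fin N) :
    (emb1 p X * emb1 q Z) x y
      = if ∀ j, j ≠ p → j ≠ q → x j = y j then X (x p) (y p) * Z (x q) (y q) else 0 := by
  rw [emb1_mul_apply]
  by_cases hK : ∀ j, j ≠ p → j ≠ q → x j = y j
  · rw [if_pos hK, Finset.sum_eq_single (y p)]
    · have hcond : ∀ j, j ≠ q → Function.update x p (y p) j = y j := by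
        intro j hj
        by_cases hjp : j = p
        · subst hjp; simp
        · rw [Function.update_of_ne hjp]; exact hK j hjp hj
      simp only [emb1, Matrix.of_apply]
      rw [if_pos hcond, Function.update_of_ne (Ne.symm hpq)]
    · intro c _ hc
      have hcond : ¬ ∀ j, j ≠ q → Function.update x p c j = y j := by
        intro hcond
        have := hcond p hpq
        rw [Function.update_self] at this
        exact hc this
      simp only [emb1, Matrix.of_apply]
      rw [if_neg hcond, mul_zero]
    · intro h; exact absurd (Finset.mem_univ _) h
  · rw [if_neg hK]
    refine Finset.sum_eq_zero fun c _ => ?_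
    have hcond : ¬ ∀ j, j ≠ q → Function.update x p c j = y j := by
      intro hcond
      refine hK fun j hjp hjq => ?_
      have := hcond j hjq
      rwa [Function.update_of_ne hjp] at this
    simp only [emb1, Matrix.of_apply]
    rw [if_neg hcond, mul_zero]

lemma emb1_comm_ne {p q : Fin k} (hpq : p ≠ q) (X Z : Matrix (Fin N) (Fin N) A)
    (hZ : ∀ a b s, Commute (Z a b) s) :
    emb1 p X * emb1 q Z = emb1 q Z * emb1 p X := by
  ext x y
  rw [emb1_mul_emb1_ne_apply hpq, emb1_mul_emb1_ne_apply (Ne.symm hpq)]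
  have hiff : (∀ j, j ≠ p → j ≠ q → x j = y j) ↔ (∀ j, j ≠ q → j ≠ p → x j = y j) :=
    ⟨fun h j h1 h2 => h j h2 h1, fun h j h1 h2 => h j h2 h1⟩
  rw [if_congr hiff rfl rfl]
  split
  · exact ((hZ (x q) (y q) (X (x p) (y p))).symm).eq
  · rfl

/-- The key one-slot commutation lemma, at the matrix-algebra level. -/
lemma emb1_comm_total (a : Fin k) (Y x0 : Matrix (Fin N) (Fin N) A) (d : A)
    (hx0 : ∀ p q s, Commute (x0 p q) s)
    (hkey : ∀ p q, Y p q * d + (Y * x0) p q = d * Y p q + (x0 * Y) p q) :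
    emb1 a Y * (Matrix.diagonal (fun _ => d) + ∑ b, emb1 b x0)
      = (Matrix.diagonal (fun _ => d) + ∑ b, emb1 b x0) * emb1 a Y := by
  classical
  rw [mul_add, add_mul, Finset.mul_sum, Finset.sum_mul]
  rw [← Finset.add_sum_erase _ (fun b => emb1 a Y * emb1 b x0) (Finset.mem_univ a),
    ← Finset.add_sum_erase _ (fun b => emb1 b x0 * emb1 a Y) (Finset.mem_univ a)]
  have hne : ∀ b ∈ Finset.univ.erase a,
      emb1 a Y * emb1 b x0 = emb1 b x0 * emb1 a Y := by
    intro b hb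
    exact emb1_comm_ne (Ne.symm (Finset.ne_of_mem_erase hb)) Y x0 hx0
  rw [Finset.sum_congr rfl hne]
  have hmain : emb1 a Y * Matrix.diagonal (fun _ => d) + emb1 a Y * emb1 a x0
      = Matrix.diagonal (fun _ => d) * emb1 a Y + emb1 a x0 * emb1 a Y := by
    rw [emb1_mul_emb1, emb1_mul_emb1]
    ext x y
    simp only [Matrix.add_apply, Matrix.mul_diagonal, Matrix.diagonal_mul]
    simp only [emb1, Matrix.of_apply]
    split_ifs with h
    · exact hkey (x a) (y a)
    · simp
  rw [← add_assoc, ← add_assoc, hmain]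

/-- Permutation matrices on `V^{⊗k}`. -/
def permMat (k N : ℕ) (σ : Equiv.Perm (Fin k)) :
    Matrix (Fin k → Fin N) (Fin k → Fin N) ℂ :=
  Matrix.of fun x y => if x = y ∘ σ then 1 else 0

lemma permMat_mul_apply (σ : Equiv.Perm (Fin k)) (T : Matrix (Fin k → Fin N) (Fin k → Fin N) ℂ)
    (x y : Fin k → Fin N) : (permMat k N σ * T) x y = T (x ∘ ⇑σ⁻¹) y := by
  rw [Matrix.mul_apply, Finset.sum_eq_single (x ∘ ⇑σ⁻¹)]
  · have : permMat k N σ x (x ∘ ⇑σ⁻¹) = 1 := by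
      simp only [permMat, Matrix.of_apply]
      rw [if_pos]
      funext j
      simp [Function.comp]
    rw [this, one_mul]
  · intro w _ hw
    have : permMat k N σ x w = 0 := by
      simp only [permMat, Matrix.of_apply]
      rw [if_neg]
      intro hxw
      refine hw (funext fun j => ?_)
      rw [hxw]
      simp [Function.comp]
    rw [this, zero_mul]
  · intro h; exact absurd (Finset.mem_univ _) h

lemma mul_permMat_apply (σ : Equiv.Perm (Fin k)) (T : Matrix (Fin k → Fin N) (Fin k → Fin N) ℂ)
    (x y : Fin k → Fin N) : (T * permMat k N σ) x y = T x (y ∘ ⇑σ) := by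
  rw [Matrix.mul_apply, Finset.sum_eq_single (y ∘ ⇑σ)]
  · have : permMat k N σ (y ∘ ⇑σ) y = 1 := by
      simp [permMat]
    rw [this, mul_one]
  · intro w _ hw
    have : permMat k N σ w y = 0 := by
      simp only [permMat, Matrix.of_apply]
      rw [if_neg]
      intro hxw
      exact hw hxw
    rw [this, mul_zero]
  · intro h; exact absurd (Finset.mem_univ _) h

lemma permMat_mul_emb1 (σ : Equiv.Perm (Fin k)) (a : Fin k) (X : Matrix (Fin N) (Fin N) ℂ) :
    permMat k N σ * emb1 a X = emb1 (σ⁻¹ a) X * permMat k N σ := by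
  ext x y
  rw [permMat_mul_apply, mul_permMat_apply]
  have hiff : (∀ j, j ≠ a → x (σ⁻¹ j) = y j) ↔ (∀ j, j ≠ σ⁻¹ a → x j = y (σ j)) := by
    constructor
    · intro h j hj
      have := h (σ j) (fun hc => hj (by simpa using congrArg (⇑σ⁻¹) hc))
      simpa using this
    · intro h j hj
      have := h (σ⁻¹ j) (fun hc => hj (by simpa using congrArg (⇑σ) hc))
      simpa using this
  simp only [emb1, Matrix.of_apply, Function.comp_apply, Equiv.Perm.inv_def, Equiv.apply_symm_apply]
  exact if_congr hiff rfl rfl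

set_option maxHeartbeats 1000000 in
lemma Ask_eq_sum (k N : ℕ) :
    Ask k N = (Nat.factorial k : ℂ)⁻¹ •
      ∑ σ : Equiv.Perm (Fin k), ((Equiv.Perm.sign σ : ℤ) : ℂ) • permMat k N σ := by
  ext x y
  simp only [Ask, permMat, Matrix.of_apply, Matrix.smul_apply, Matrix.sum_apply,
    smul_eq_mul]

lemma Ask_comm_sum (x : Matrix (Fin N) (Fin N) ℂ) :
    Ask k N * (∑ a : Fin k, emb1 a x) = (∑ a : Fin k, emb1 a x) * Ask k N := by
  rw [Ask_eq_sum, smul_mul_assoc, mul_smul_comm, Finset.sum_mul, Finset.mul_sum]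
  congr 1
  refine Finset.sum_congr rfl fun σ _ => ?_
  rw [smul_mul_assoc, mul_smul_comm]
  congr 1
  rw [Finset.sum_mul, Finset.mul_sum]
  have h1 : ∀ a : Fin k, permMat k N σ * emb1 a x = emb1 (σ⁻¹ a) x * permMat k N σ :=
    fun a => permMat_mul_emb1 σ a x
  rw [Finset.sum_congr rfl fun a _ => h1 a]
  exact Equiv.sum_comp (σ⁻¹ : Equiv.Perm (Fin k)) (fun b => emb1 b x * permMat k N σ)

end AuxMatrix

section AuxTrace

variable {I : Type*} [Fintype I] [DecidableEq I] {S : Type*} [Ring S] [Algebra ℂ S]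

lemma trace_mul_diag (T : Matrix I I S) (d : S) :
    (T * Matrix.diagonal fun _ => d).trace = T.trace * d := by
  simp only [Matrix.trace, Matrix.diag, Matrix.mul_diagonal, Finset.sum_mul]

lemma diag_mul_trace (T : Matrix I I S) (d : S) :
    ((Matrix.diagonal fun _ => d) * T).trace = d * T.trace := by
  simp only [Matrix.trace, Matrix.diag, Matrix.diagonal_mul, Finset.mul_sum]

lemma trace_map_comm (A : Matrix I I ℂ) (T : Matrix I I S) :
    (A.map (algebraMap ℂ S) * T).trace = (T * A.map (algebraMap ℂ S)).trace := by
  simp only [Matrix.trace, Matrix.diag, Matrix.mul_apply, Matrix.map_apply]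
  rw [Finset.sum_comm]
  exact Finset.sum_congr rfl fun w _ => Finset.sum_congr rfl fun x _ =>
    Algebra.commutes (A x w) (T w x)

lemma map_diag_comm (A : Matrix I I ℂ) (d : S) :
    A.map (algebraMap ℂ S) * (Matrix.diagonal fun _ => d)
      = (Matrix.diagonal fun _ => d) * A.map (algebraMap ℂ S) := by
  ext x y
  rw [Matrix.mul_diagonal, Matrix.diagonal_mul]
  simp only [Matrix.map_apply]
  exact Algebra.commutes (A x y) d

end AuxTrace

section AuxJets

variable {R : Type*} [Ring R]

lemma jOne_comm (C : R) (j m : ℕ) : (jOne j m : R) * C = C * jOne j m := by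
  unfold jOne
  split_ifs <;> simp

lemma jmul_comm (C : R) (B E : ℕ → R) (hB : ∀ m, B m * C = C * B m)
    (hE : ∀ m, E m * C = C * E m) (m : ℕ) : jmul B E m * C = C * jmul B E m := by
  unfold jmul
  rw [Finset.sum_mul, Finset.mul_sum]
  refine Finset.sum_congr rfl fun r _ => ?_
  have hin : (B r * E (m - r)) * C = C * (B r * E (m - r)) := by
    rw [mul_assoc, hE, ← mul_assoc, hB, mul_assoc]
  rw [mul_assoc, hin, ← mul_assoc, (Nat.cast_commute (m.choose r) C).eq, mul_assoc]

lemma foldr_comm (C : R) (L : List (ℕ → R))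
    (hL : ∀ B ∈ L, ∀ m, B m * C = C * B m) :
    ∀ j m, (L.foldr jComp1 jOne) j m * C = C * (L.foldr jComp1 jOne) j m := by
  induction L with
  | nil => exact fun j m => jOne_comm C j m
  | cons B L ih =>
    intro j m
    have hB := hL B List.mem_cons_self
    have hE := ih (fun B' hB' => hL B' (List.mem_cons_of_mem _ hB'))
    simp only [List.foldr_cons]
    show jComp1 B (L.foldr jComp1 jOne) j m * C = C * jComp1 B (L.foldr jComp1 jOne) j m
    simp only [jComp1]
    rw [sub_mul, mul_sub, add_mul, mul_add, hE,
      jmul_comm C B _ (fun m' => hB m') (fun m' => hE j m') m]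
    congr 2
    split_ifs
    · simp
    · exact hE _ _

end AuxJets

section AuxAct

variable {N n : ℕ}
variable (M : Fin n → Type*) [∀ i, AddCommGroup (M i)] [∀ i, Module ℂ (M i)]
variable (ρ : ∀ i, gl N →ₗ⁅ℂ⁆ Module.End ℂ (M i))

lemma pimap_update_sub (i : Fin n) (u v : M i →ₗ[ℂ] M i) :
    PiTensorProduct.map (Function.update (fun j => (LinearMap.id : M j →ₗ[ℂ] M j)) i (u - v))
      = PiTensorProduct.map (Function.update (fun j => LinearMap.id) i u)
        - PiTensorProduct.map (Function.update (fun j => LinearMap.id) i v) :=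
  eq_sub_of_add_eq (by rw [← PiTensorProduct.map_update_add, sub_add_cancel])

/-- `act M ρ i` as a linear map in the `gl_N` argument. -/
def actL (i : Fin n) : gl N →ₗ[ℂ] Module.End ℂ (⨂[ℂ] j, M j) where
  toFun := act M ρ i
  map_add' a b := by
    show act M ρ i (a + b) = act M ρ i a + act M ρ i b
    unfold act
    rw [map_add]
    exact PiTensorProduct.map_update_add (fun j => (LinearMap.id : M j →ₗ[ℂ] M j)) i
      (ρ i a) (ρ i b)
  map_smul' c a := by
    show act M ρ i (c • a) = c • act M ρ i a
    unfold act
    rw [map_smul]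
    exact PiTensorProduct.map_update_smul (fun j => (LinearMap.id : M j →ₗ[ℂ] M j)) i
      c (ρ i a)

lemma actL_apply (i : Fin n) (y : gl N) : actL M ρ i y = act M ρ i y := rfl

lemma act_act (i : Fin n) (a b : gl N) :
    act M ρ i a * act M ρ i b
      = PiTensorProduct.map
          (Function.update (fun j => (LinearMap.id : M j →ₗ[ℂ] M j)) i (ρ i a ∘ₗ ρ i b)) := by
  unfold act
  rw [Module.End.mul_eq_comp, ← PiTensorProduct.map_comp]
  congr 1
  funext j
  by_cases hj : j = i
  · subst hj; simp
  · simp [Function.update_of_ne hj]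

lemma act_lie (i : Fin n) (a b : gl N) :
    act M ρ i a * act M ρ i b - act M ρ i b * act M ρ i a = act M ρ i ⁅a, b⁆ := by
  rw [act_act, act_act]
  have h3 : ρ i ⁅a, b⁆ = (ρ i a ∘ₗ ρ i b) - (ρ i b ∘ₗ ρ i a) := by
    rw [LieHom.map_lie, Ring.lie_def, Module.End.mul_eq_comp, Module.End.mul_eq_comp]
  show _ = act M ρ i ⁅a, b⁆
  unfold act
  rw [h3, pimap_update_sub]

lemma act_comm_ne {i i' : Fin n} (h : i ≠ i') (a b : gl N) :
    act M ρ i a * act M ρ i' b = act M ρ i' b * act M ρ i a := by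
  unfold act
  rw [Module.End.mul_eq_comp, Module.End.mul_eq_comp, ← PiTensorProduct.map_comp,
    ← PiTensorProduct.map_comp]
  congr 1
  funext j
  by_cases hji : j = i
  · subst hji
    simp [Function.update_self, Function.update_of_ne h, Function.update_of_ne (Ne.symm h)]
  · by_cases hji' : j = i'
    · subst hji'
      simp [Function.update_self, Function.update_of_ne h, Function.update_of_ne (Ne.symm h),
        Function.update_of_ne hji]
    · simp [Function.update_of_ne hji, Function.update_of_ne hji']

lemma act_sum_comm (i : Fin n) (y x : gl N) :
    act M ρ i y * (∑ j, act M ρ j x) - (∑ j, act M ρ j x) * act M ρ i y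
      = act M ρ i ⁅y, x⁆ := by
  rw [Finset.mul_sum, Finset.sum_mul, ← Finset.sum_sub_distrib, Finset.sum_eq_single i]
  · exact act_lie M ρ i y x
  · intro j _ hj
    rw [act_comm_ne M ρ (Ne.symm hj), sub_self]
  · intro h; exact absurd (Finset.mem_univ _) h

end AuxAct

lemma matE_bracket {N : ℕ} (x : gl N) (p q : Fin N) :
    ⁅matE N q p, x⁆ = (∑ c, x p c • matE N q c) - ∑ c, x c q • matE N c p := by
  ext a b
  simp only [Ring.lie_def, Matrix.sub_apply, Matrix.sum_apply, Matrix.smul_apply, matE,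
    Matrix.mul_apply, Matrix.single, Matrix.of_apply, smul_eq_mul, ite_and,
    mul_ite, ite_mul, mul_zero, zero_mul, mul_one, one_mul]
  simp [Finset.sum_ite_eq, Finset.sum_ite_eq']

section MainAux

variable {N n : ℕ}
variable (M : Fin n → Type*) [∀ i, AddCommGroup (M i)] [∀ i, Module ℂ (M i)]
variable (ρ : ∀ i, gl N →ₗ⁅ℂ⁆ Module.End ℂ (M i))
variable (z : Fin n → ℂ)

lemma gaudinB_zero_eq (u : ℂ) (a : Fin N) (m : ℕ) :
    gaudinB M ρ z 0 u a m
      = ∑ i, invJet u (z i) m •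
          emb1 a (Matrix.of fun p q => act M ρ i (matE N q p)) := by
  unfold gaudinB
  have h0 : ((0 : gl N).map (algebraMap ℂ (Module.End ℂ (⨂[ℂ] j, M j)))) = 0 := by
    ext p q; simp
  rw [h0, emb1_zero, ite_self, zero_add]

lemma emb1Y_comm (x : gl N) (i : Fin n) (a : Fin N) :
    emb1 a (Matrix.of fun p q => act M ρ i (matE N q p))
        * (Matrix.diagonal (fun _ : Fin N → Fin N => ∑ j, act M ρ j x)
            + ∑ b : Fin N, emb1 b (x.map (algebraMap ℂ (Module.End ℂ (⨂[ℂ] j, M j)))))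
      = (Matrix.diagonal (fun _ : Fin N → Fin N => ∑ j, act M ρ j x)
            + ∑ b : Fin N, emb1 b (x.map (algebraMap ℂ (Module.End ℂ (⨂[ℂ] j, M j)))))
          * emb1 a (Matrix.of fun p q => act M ρ i (matE N q p)) := by
  apply emb1_comm_total
  · intro p q s
    simp only [Matrix.map_apply]
    exact Algebra.commute_algebraMap_left (x p q) s
  · intro p q
    set SEnd := Module.End ℂ (⨂[ℂ] j, M j) with hSEnd
    set Y : Matrix (Fin N) (Fin N) SEnd :=
      Matrix.of fun p q => act M ρ i (matE N q p) with hYdef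
    set x0 : Matrix (Fin N) (Fin N) SEnd := x.map (algebraMap ℂ SEnd) with hx0def
    have h1 : Y p q * (∑ j, act M ρ j x) - (∑ j, act M ρ j x) * Y p q
        = act M ρ i ⁅matE N q p, x⁆ := act_sum_comm M ρ i (matE N q p) x
    have e1 : ∀ c, x0 p c * Y c q = (x p c) • act M ρ i (matE N q c) := by
      intro c
      simp only [hx0def, hYdef, Matrix.map_apply, Matrix.of_apply]
      exact (Algebra.smul_def (x p c) _).symm
    have e2 : ∀ c, Y p c * x0 c q = (x c q) • act M ρ i (matE N c p) := by
      intro c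
      simp only [hx0def, hYdef, Matrix.map_apply, Matrix.of_apply]
      rw [← Algebra.commutes (x c q) (act M ρ i (matE N c p))]
      exact (Algebra.smul_def (x c q) _).symm
    have hxY : (x0 * Y) p q = actL M ρ i (∑ c, x p c • matE N q c) := by
      rw [Matrix.mul_apply, map_sum]
      refine Finset.sum_congr rfl fun c _ => ?_
      rw [e1 c, map_smul, actL_apply]
    have hYx : (Y * x0) p q = actL M ρ i (∑ c, x c q • matE N c p) := by
      rw [Matrix.mul_apply, map_sum]
      refine Finset.sum_congr rfl fun c _ => ?_
      rw [e2 c, map_smul, actL_apply]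
    have h2 : (x0 * Y) p q - (Y * x0) p q = act M ρ i ⁅matE N q p, x⁆ := by
      rw [hxY, hYx, ← map_sub, ← matE_bracket, actL_apply]
    have h3 := sub_eq_sub_iff_add_eq_add.mp (h1.trans h2.symm)
    rw [add_comm ((∑ j, act M ρ j x) * Y p q)]
    exact h3

end MainAux

/-- Proposition 8.3, evaluation form: for `K = 0`, the Gaudin transfer matrix
commutes with the diagonal `gl_N`-action on `M`:
`𝒢_{k,0}(u;z) ∘ (Σ_i x^{(i)}) = (Σ_i x^{(i)}) ∘ 𝒢_{k,0}(u;z)`. -/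
theorem statement12 {N n : ℕ} (hN : 1 ≤ N)
    (M : Fin n → Type*) [∀ i, AddCommGroup (M i)] [∀ i, Module ℂ (M i)]
    (ρ : ∀ i, gl N →ₗ⁅ℂ⁆ Module.End ℂ (M i))
    (z : Fin n → ℂ) (hz : Function.Injective z)
    (k : ℕ) (hkN : k ≤ N)
    (u : ℂ) (hu : ∀ i : Fin n, u ≠ z i)
    (x : gl N) :
    gaudinG M ρ z 0 k u * (∑ i, act M ρ i x)
      = (∑ i, act M ρ i x) * gaudinG M ρ z 0 k u := by
  classical
  unfold gaudinG
  set Am := (Ask N N).map (algebraMap ℂ (Module.End ℂ (⨂[ℂ] j, M j))) with hAm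
  set E := gaudinComp M ρ z 0 u (N - k) 0 with hEe
  set Xh := ∑ i, act M ρ i x with hXh
  set V := ∑ b : Fin N, emb1 b (x.map (algebraMap ℂ (Module.End ℂ (⨂[ℂ] j, M j)))) with hV
  set D := Matrix.diagonal (fun _ : Fin N → Fin N => Xh) with hD
  have hXV : V = (∑ b : Fin N, emb1 b x).map (algebraMap ℂ (Module.End ℂ (⨂[ℂ] j, M j))) := by
    rw [hV, Finset.sum_congr rfl fun b _ =>
      emb1_map (algebraMap ℂ (Module.End ℂ (⨂[ℂ] j, M j))) b x]
    ext xx yy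
    simp [Matrix.map_apply, Matrix.sum_apply]
  have hB : ∀ (a : Fin N) (m : ℕ),
      gaudinB M ρ z 0 u a m * (D + V) = (D + V) * gaudinB M ρ z 0 u a m := by
    intro a m
    rw [gaudinB_zero_eq, Finset.sum_mul, Finset.mul_sum]
    refine Finset.sum_congr rfl fun i _ => ?_
    rw [smul_mul_assoc, mul_smul_comm]
    exact congrArg _ (emb1Y_comm M ρ x i a)
  have hEc : ∀ j m, gaudinComp M ρ z 0 u j m * (D + V) = (D + V) * gaudinComp M ρ z 0 u j m := by
    intro j m
    unfold gaudinComp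
    refine foldr_comm (D + V) _ ?_ j m
    intro B hBmem m'
    simp only [List.mem_map] at hBmem
    obtain ⟨a, -, rfl⟩ := hBmem
    exact hB a m'
  have hAd : Am * (D + V) = (D + V) * Am := by
    rw [mul_add, add_mul, hAm, hD, map_diag_comm, hXV, ← Matrix.map_mul, ← Matrix.map_mul,
      Ask_comm_sum]
  have hEA : (E * Am) * (D + V) = (D + V) * (E * Am) := by
    rw [mul_assoc, hAd, ← mul_assoc, hEe, hEc, mul_assoc]
  have h5 : Matrix.trace ((E * Am) * D) + Matrix.trace ((E * Am) * V)
      = Matrix.trace (D * (E * Am)) + Matrix.trace (V * (E * Am)) := by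
    have h := congrArg Matrix.trace hEA
    rwa [mul_add, add_mul, Matrix.trace_add, Matrix.trace_add] at h
  have h6 : Matrix.trace ((E * Am) * V) = Matrix.trace (V * (E * Am)) := by
    rw [hXV]
    exact (trace_map_comm _ _).symm
  rw [h6] at h5
  have h7 := add_right_cancel h5
  have h8 : Matrix.trace (E * Am) * Xh = Xh * Matrix.trace (E * Am) := by
    rw [← trace_mul_diag (E * Am) Xh, ← diag_mul_trace (E * Am) Xh]
    exact h7
  rw [smul_mul_assoc, mul_smul_comm]
  exact congrArg _ h8

end BetheStatements
end
end
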